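/- Let n ≥ 2 and let S be a finite family of subsets of Fin n with 1 ≤ |A| ≤ n−1 for each A ∈ S, which is pairwise compatible: for all A, B ∈ S, A ⊆ B or B ⊆ A or A ∩ B = ∅. Let τ : S → ℝ be any weights, let π₀, π₁ ∈ ℝ, and set v := π₀·|∅⟩ + π₁·|Fin n⟩. Then the 𝔏-representation and the K-representation of the phylogenetic tensor coincide: exp(∑_{A∈S, |A|=1} τ(A)·M_A) · exp(∑_{A∈S, |A|=2} τ(A)·M_A) · ⋯ · exp(∑_{A∈S, |A|=n−1} τ(A)·M_A) · v = exp(∑_{A∈S} τ(A)·(K^(A) − I)) · v, where the left-hand factors are composed in order of increasing cardinality from left to right and I is the identity matrix on (Fin n → Fin 2)-indexed vectors. -/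

import Mathlib

open Matrix


/-- The Markov generator `L_α = [[-1, 0], [1, 0]]`. -/
noncomputable def Lalpha : Matrix (Fin 2) (Fin 2) ℝ := !![-1, 0; 1, 0]

/-- The Markov generator `L_β = [[0, 1], [0, -1]]`. -/
noncomputable def Lbeta : Matrix (Fin 2) (Fin 2) ℝ := !![0, 1; 0, -1]

/-- `X^(A)`: the operator on the `n`-fold tensor power `(ℝ²)^⊗n` (indexed by functions
`Fin n → Fin 2`) acting as `X` on the tensor factors in `A` and as the identity elsewhere:
`(X^(A))_{f,g} = (∏_{i ∈ A} X_{f(i),g(i)}) · (∏_{j ∉ A} [f(j) = g(j)])`. -/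
noncomputable def opOn {n : ℕ} (X : Matrix (Fin 2) (Fin 2) ℝ) (A : Finset (Fin n)) :
    Matrix (Fin n → Fin 2) (Fin n → Fin 2) ℝ :=
  fun f g => (∏ i ∈ A, X (f i) (g i)) * ∏ j ∈ Aᶜ, (if f j = g j then (1 : ℝ) else 0)

/-- `𝔏_X^A := ∑_{∅ ≠ B ⊆ A} X^(B)`. -/
noncomputable def frakLA {n : ℕ} (X : Matrix (Fin 2) (Fin 2) ℝ) (A : Finset (Fin n)) :
    Matrix (Fin n → Fin 2) (Fin n → Fin 2) ℝ :=
  ∑ B ∈ A.powerset.filter (fun B => B.Nonempty), opOn X B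

/-- The binary-symmetric rate operator `M_A := 𝔏_α^A + 𝔏_β^A`. -/
noncomputable def MA {n : ℕ} (A : Finset (Fin n)) :
    Matrix (Fin n → Fin 2) (Fin n → Fin 2) ℝ :=
  frakLA Lalpha A + frakLA Lbeta A

/-- `|B⟩`: the standard basis vector of `ℝ^(Fin n → Fin 2)` at the indicator function of
`B ⊆ Fin n`. -/
noncomputable def ket {n : ℕ} (B : Finset (Fin n)) : (Fin n → Fin 2) → ℝ :=
  fun f => if f = (fun i => if i ∈ B then 1 else 0) then 1 else 0

/-- The permutation matrix `K = [[0,1],[1,0]]`. -/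
noncomputable def Kmat : Matrix (Fin 2) (Fin 2) ℝ := !![0, 1; 1, 0]

/-!
Every operator in sight acts on the basis kets `|C⟩` through a map of sets: `K^(A)|C⟩ = |C ∆ A⟩`,
and since `1 + 𝔏_X^A = (1 + X)^(A)`, where `1 + L_α` and `1 + L_β` are the matrices of the constant
maps to `1` and to `0`, `M_A|C⟩ = (|C ∪ A⟩ - |C⟩) + (|C \ A⟩ - |C⟩)`. Hence `M_A` and `K^(A) - 1`
agree on `|C⟩` as soon as `C` does not cut `A`. The kets `|C⟩` cutting no split of cardinality at
most `k` span a subspace containing `v`, which by compatibility is invariant under `K^(A)` for every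
`A ∈ S` with `|A| ≥ k`. Since the `K^(A)` commute, the right-hand side factors as
`exp(N₁) ⋯ exp(N_{n-1}) v` with `N_k = ∑_{|A| = k} τ_A (K^(A) - 1)`. Peeling factors off from the
right, each `exp(N_k)` acts on a vector of the `k`-th subspace, where it can be replaced by the
`M`-factor of layer `k`.
-/

namespace Matrix

variable {𝕂 ι : Type*} [RCLike 𝕂] [Fintype ι] [DecidableEq ι]

theorem hasSum_exp_mulVec (X : Matrix ι ι 𝕂) (w : ι → 𝕂) :
    HasSum (fun m => (m.factorial⁻¹ : 𝕂) • (X ^ m *ᵥ w)) (NormedSpace.exp X *ᵥ w) := by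
  -- Any norm will do: the ℓ∞ operator norm induces the product topology used by `exp`,
  -- which is why the final `rfl` succeeds.
  let _ : NormedRing (Matrix ι ι 𝕂) := Matrix.linftyOpNormedRing
  let _ : NormedAlgebra 𝕂 (Matrix ι ι 𝕂) := Matrix.linftyOpNormedAlgebra
  have _ : @CompleteSpace (Matrix ι ι 𝕂) PseudoMetricSpace.toUniformSpace :=
    FiniteDimensional.complete 𝕂 _
  let T : Matrix ι ι 𝕂 →ₗ[𝕂] ι → 𝕂 :=
    { toFun := fun M => M *ᵥ w
      map_add' := fun M N => add_mulVec M N w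
      map_smul' := fun c M => smul_mulVec c M w }
  have h := (NormedSpace.exp_series_hasSum_exp' (𝕂 := 𝕂) X).map T.toAddMonoidHom
      T.continuous_of_finiteDimensional
  convert h using 2
  · simp [T, smul_mulVec]
  · rfl

variable {W : Submodule 𝕂 (ι → 𝕂)} {M N : Matrix ι ι 𝕂} {w : ι → 𝕂}

theorem pow_mulVec_mem (hN : ∀ u ∈ W, N *ᵥ u ∈ W) (hw : w ∈ W) (m : ℕ) : N ^ m *ᵥ w ∈ W := by
  induction m with
  | zero => simpa using hw
  | succ m ih => simpa [pow_succ', ← mulVec_mulVec] using hN _ ih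

theorem pow_mulVec_eq_of_eqOn (hN : ∀ u ∈ W, N *ᵥ u ∈ W) (hMN : ∀ u ∈ W, M *ᵥ u = N *ᵥ u)
    (hw : w ∈ W) (m : ℕ) : M ^ m *ᵥ w = N ^ m *ᵥ w := by
  induction m with
  | zero => rfl
  | succ m ih =>
    rw [pow_succ', pow_succ', ← mulVec_mulVec, ← mulVec_mulVec, ih,
      hMN _ (pow_mulVec_mem hN hw m)]

theorem exp_mulVec_mem (hN : ∀ u ∈ W, N *ᵥ u ∈ W) (hw : w ∈ W) :
    NormedSpace.exp N *ᵥ w ∈ W :=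
  (W.closed_of_finiteDimensional).mem_of_tendsto (hasSum_exp_mulVec N w)
    (.of_forall fun _ => W.sum_mem fun m _ => W.smul_mem _ (pow_mulVec_mem hN hw m))

theorem exp_mulVec_eq_of_eqOn (hN : ∀ u ∈ W, N *ᵥ u ∈ W) (hMN : ∀ u ∈ W, M *ᵥ u = N *ᵥ u)
    (hw : w ∈ W) : NormedSpace.exp M *ᵥ w = NormedSpace.exp N *ᵥ w := by
  have hM := hasSum_exp_mulVec M w
  simp only [pow_mulVec_eq_of_eqOn hN hMN hw] at hM
  exact hM.unique (hasSum_exp_mulVec N w)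

theorem list_prod_map_range_mulVec {R : Type*} [Semiring R] {E : ℕ → Matrix ι ι R}
    {r : ℕ → ι → R} (h : ∀ j, E j *ᵥ r (j + 1) = r j) (m : ℕ) :
    ((List.range m).map E).prod *ᵥ r m = r 0 := by
  induction m with
  | zero => simp
  | succ m ih => simp [List.range_succ, ← mulVec_mulVec, h, ih]

end Matrix

section Uncut

variable {α : Type*}

def Uncut (A C : Finset α) : Prop := ∀ x ∈ A, ∀ y ∈ A, (x ∈ C ↔ y ∈ C)

theorem uncut_iff {A C : Finset α} : Uncut A C ↔ A ⊆ C ∨ Disjoint A C := by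
  simp only [Uncut, Finset.subset_iff, Finset.disjoint_left]
  constructor
  · intro h
    by_cases hx : ∃ x ∈ A, x ∈ C
    · obtain ⟨x, hxA, hxC⟩ := hx
      exact Or.inl fun y hy => (h x hxA y hy).mp hxC
    · push Not at hx
      exact Or.inr hx
  · rintro (h | h) x hx y hy
    · exact iff_of_true (h hx) (h hy)
    · exact iff_of_false (h hx) (h hy)

theorem Uncut.symmDiff [DecidableEq α] {A C D : Finset α} (hC : Uncut A C) (hD : Uncut A D) :
    Uncut A (symmDiff C D) := by
  intro x hx y hy
  simp only [Finset.mem_symmDiff]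
  have := hC x hx y hy
  have := hD x hx y hy
  tauto

theorem uncut_empty (A : Finset α) : Uncut A ∅ := by simp [Uncut]

theorem uncut_univ [Fintype α] (A : Finset α) : Uncut A Finset.univ := by simp [Uncut]

theorem uncut_of_compatible [DecidableEq α] {A B : Finset α} (h : A ⊆ B ∨ B ⊆ A ∨ A ∩ B = ∅)
    (hcard : A.card ≤ B.card) : Uncut A B := by
  rw [uncut_iff, Finset.disjoint_iff_inter_eq_empty]
  rcases h with h | h | h
  · exact Or.inl h
  · exact Or.inl (Finset.eq_of_subset_of_card_le h hcard).ge
  · exact Or.inr h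

end Uncut

section

variable {n : ℕ}

def indicatorBits (C : Finset (Fin n)) : Fin n → Fin 2 := fun i => if i ∈ C then 1 else 0

theorem ket_eq_single (C : Finset (Fin n)) : ket C = Pi.single (indicatorBits C) 1 := by
  funext f
  rw [Pi.single_apply]
  rfl

theorem opOn_mulVec_single_of_eq_ite {X : Matrix (Fin 2) (Fin 2) ℝ} {σ : Fin 2 → Fin 2}
    (hX : ∀ x y, X x y = if x = σ y then 1 else 0) (A : Finset (Fin n)) (g : Fin n → Fin 2) :
    opOn X A *ᵥ Pi.single g 1 = Pi.single (fun i => if i ∈ A then σ (g i) else g i) 1 := by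
  funext f
  set g' : Fin n → Fin 2 := fun i => if i ∈ A then σ (g i) else g i
  have hin : ∀ i ∈ A, X (f i) (g i) = if f i = g' i then 1 else 0 := by
    intro i hi
    simp [g', hX, hi]
  have hout : ∀ i ∈ Aᶜ, (if f i = g i then (1 : ℝ) else 0) = if f i = g' i then 1 else 0 := by
    intro i hi
    simp [g', Finset.mem_compl.mp hi]
  rw [mulVec_single_one, Pi.single_apply, col_apply, opOn, Finset.prod_congr rfl hin,
    Finset.prod_congr rfl hout, Finset.prod_mul_prod_compl, Fintype.prod_boole]
  congr 1
  exact propext funext_iff.symm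

theorem opOn_mulVec_ket_of_eq_ite {X : Matrix (Fin 2) (Fin 2) ℝ} {σ : Fin 2 → Fin 2}
    (hX : ∀ x y, X x y = if x = σ y then 1 else 0) {A C D : Finset (Fin n)}
    (hD : ∀ i, (if i ∈ A then σ (indicatorBits C i) else indicatorBits C i) = indicatorBits D i) :
    opOn X A *ᵥ ket C = ket D := by
  rw [ket_eq_single, ket_eq_single, opOn_mulVec_single_of_eq_ite hX, funext hD]

theorem Kmat_apply (x y : Fin 2) : Kmat x y = if x = y + 1 then 1 else 0 := by
  fin_cases x <;> fin_cases y <;> simp [Kmat]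

theorem one_add_Lalpha_apply (x y : Fin 2) : (1 + Lalpha) x y = if x = 1 then 1 else 0 := by
  fin_cases x <;> fin_cases y <;> simp [Lalpha]

theorem one_add_Lbeta_apply (x y : Fin 2) : (1 + Lbeta) x y = if x = 0 then 1 else 0 := by
  fin_cases x <;> fin_cases y <;> simp [Lbeta]

theorem opOn_Kmat_mulVec_ket (A C : Finset (Fin n)) :
    opOn Kmat A *ᵥ ket C = ket (symmDiff C A) :=
  opOn_mulVec_ket_of_eq_ite Kmat_apply fun i => by
    by_cases hA : i ∈ A <;> by_cases hC : i ∈ C <;>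
      simp [indicatorBits, Finset.mem_symmDiff, hA, hC]

theorem opOn_one_add_Lalpha_mulVec_ket (A C : Finset (Fin n)) :
    opOn (1 + Lalpha) A *ᵥ ket C = ket (C ∪ A) :=
  opOn_mulVec_ket_of_eq_ite (σ := fun _ => 1) one_add_Lalpha_apply fun i => by
    by_cases hA : i ∈ A <;> simp [indicatorBits, hA]

theorem opOn_one_add_Lbeta_mulVec_ket (A C : Finset (Fin n)) :
    opOn (1 + Lbeta) A *ᵥ ket C = ket (C \ A) :=
  opOn_mulVec_ket_of_eq_ite (σ := fun _ => 0) one_add_Lbeta_apply fun i => by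
    by_cases hA : i ∈ A <;> simp [indicatorBits, hA]

theorem commute_opOn_Kmat (A B : Finset (Fin n)) : Commute (opOn Kmat A) (opOn Kmat B) := by
  refine ext_of_mulVec_single fun g => ?_
  rw [← mulVec_mulVec, ← mulVec_mulVec]
  simp only [opOn_mulVec_single_of_eq_ite Kmat_apply]
  congr 1
  funext i
  split_ifs <;> rfl

theorem opOn_empty (X : Matrix (Fin 2) (Fin 2) ℝ) : opOn X (∅ : Finset (Fin n)) = 1 := by
  ext f g
  simp [opOn, one_apply, Fintype.prod_boole, funext_iff]

theorem sum_powerset_opOn (X : Matrix (Fin 2) (Fin 2) ℝ) (A : Finset (Fin n)) :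
    ∑ B ∈ A.powerset, opOn X B = opOn (1 + X) A := by
  ext f g
  simp only [opOn, Matrix.sum_apply, Matrix.add_apply, one_apply]
  rw [Finset.prod_congr rfl fun i _ => add_comm _ _, Finset.prod_add, Finset.sum_mul]
  refine Finset.sum_congr rfl fun B hB => ?_
  have hcompl : A \ B ∪ Aᶜ = Bᶜ := by
    ext i
    simp only [Finset.mem_union, Finset.mem_sdiff, Finset.mem_compl]
    have := @Finset.mem_powerset.mp hB i
    tauto
  rw [mul_assoc, ← Finset.prod_union (disjoint_compl_right.mono_left Finset.sdiff_subset), hcompl]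

theorem frakLA_eq_opOn_one_add_sub_one (X : Matrix (Fin 2) (Fin 2) ℝ) (A : Finset (Fin n)) :
    frakLA X A = opOn (1 + X) A - 1 := by
  have hne : A.powerset.filter (fun B => B.Nonempty) = A.powerset.erase ∅ := by
    simp only [Finset.nonempty_iff_ne_empty, Finset.filter_ne']
  rw [← sum_powerset_opOn, ← Finset.add_sum_erase _ _ (Finset.empty_mem_powerset A), opOn_empty,
    frakLA, hne, add_sub_cancel_left]

theorem MA_mulVec_ket (A C : Finset (Fin n)) :
    MA A *ᵥ ket C = (ket (C ∪ A) - ket C) + (ket (C \ A) - ket C) := by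
  rw [MA, add_mulVec, frakLA_eq_opOn_one_add_sub_one, frakLA_eq_opOn_one_add_sub_one, sub_mulVec,
    sub_mulVec, one_mulVec, opOn_one_add_Lalpha_mulVec_ket, opOn_one_add_Lbeta_mulVec_ket]

theorem MA_mulVec_ket_of_uncut {A C : Finset (Fin n)} (h : Uncut A C) :
    MA A *ᵥ ket C = (opOn Kmat A - 1) *ᵥ ket C := by
  rw [MA_mulVec_ket, sub_mulVec, one_mulVec, opOn_Kmat_mulVec_ket]
  rcases uncut_iff.mp h with hAC | hAC
  · rw [Finset.union_eq_left.mpr hAC, symmDiff_of_ge hAC]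
    abel
  · rw [Finset.sdiff_eq_self_of_disjoint hAC.symm, hAC.symm.symmDiff_eq_sup, Finset.sup_eq_union]
    abel

noncomputable def kGen (τ : Finset (Fin n) → ℝ) (T : Finset (Finset (Fin n))) :
    Matrix (Fin n → Fin 2) (Fin n → Fin 2) ℝ :=
  ∑ A ∈ T, τ A • (opOn Kmat A - 1)

theorem commute_kGen (τ : Finset (Fin n) → ℝ) (T T' : Finset (Finset (Fin n))) :
    Commute (kGen τ T) (kGen τ T') :=
  .sum_left _ _ _ fun A _ => .sum_right _ _ _ fun B _ =>
    ((((commute_opOn_Kmat A B).sub_right (.one_right _)).sub_left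
      ((Commute.one_left _).sub_right (.one_right _))).smul_left _).smul_right _

theorem kGen_mulVec_ket (τ : Finset (Fin n) → ℝ) (T : Finset (Finset (Fin n)))
    (C : Finset (Fin n)) :
    kGen τ T *ᵥ ket C = ∑ A ∈ T, τ A • (ket (symmDiff C A) - ket C) := by
  simp only [kGen, sum_mulVec, smul_mulVec, sub_mulVec, one_mulVec, opOn_Kmat_mulVec_ket]

def layerSpan (S : Finset (Finset (Fin n))) (k : ℕ) : Submodule ℝ ((Fin n → Fin 2) → ℝ) :=
  Submodule.span ℝ (ket '' {C | ∀ A ∈ S, A.card ≤ k → Uncut A C})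

section layerSpan

variable {S : Finset (Finset (Fin n))} {k : ℕ}

theorem ket_mem_layerSpan {C : Finset (Fin n)} (hC : ∀ A ∈ S, A.card ≤ k → Uncut A C) :
    ket C ∈ layerSpan S k :=
  Submodule.subset_span ⟨C, hC, rfl⟩

theorem kGen_mulVec_mem_layerSpan (τ : Finset (Fin n) → ℝ) {T : Finset (Finset (Fin n))}
    (hT : ∀ A ∈ T, ∀ A' ∈ S, A'.card ≤ k → Uncut A' A) {w : (Fin n → Fin 2) → ℝ}
    (hw : w ∈ layerSpan S k) : kGen τ T *ᵥ w ∈ layerSpan S k := by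
  have hle : layerSpan S k ≤ (layerSpan S k).comap (kGen τ T).mulVecLin := by
    refine Submodule.span_le.mpr ?_
    rintro _ ⟨C, hC, rfl⟩
    rw [SetLike.mem_coe, Submodule.mem_comap, mulVecLin_apply, kGen_mulVec_ket]
    exact Submodule.sum_mem _ fun A hA => Submodule.smul_mem _ _ <| Submodule.sub_mem _
      (ket_mem_layerSpan fun A' hA' hk => (hC A' hA' hk).symmDiff (hT A hA A' hA' hk))
      (ket_mem_layerSpan hC)
  exact hle hw

theorem sum_MA_mulVec_eq_kGen_mulVec (τ : Finset (Fin n) → ℝ) {w : (Fin n → Fin 2) → ℝ}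
    (hw : w ∈ layerSpan S k) :
    (∑ A ∈ S.filter (fun A => A.card = k), τ A • MA A) *ᵥ w =
      kGen τ (S.filter (fun A => A.card = k)) *ᵥ w := by
  refine LinearMap.eqOn_span' (f := mulVecLin _) (g := mulVecLin _) ?_ hw
  rintro _ ⟨C, hC, rfl⟩
  simp only [mulVecLin_apply, kGen, sum_mulVec, smul_mulVec]
  refine Finset.sum_congr rfl fun A hA => ?_
  rw [Finset.mem_filter] at hA
  rw [MA_mulVec_ket_of_uncut (hC A hA.1 hA.2.le)]

end layerSpan

theorem exp_sum_MA_mulVec_exp_kGen {S : Finset (Finset (Fin n))}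
    (hcompat : ∀ A ∈ S, ∀ B ∈ S, A ⊆ B ∨ B ⊆ A ∨ A ∩ B = ∅) (τ : Finset (Fin n) → ℝ) (m : ℕ)
    {v : (Fin n → Fin 2) → ℝ} (hv : v ∈ layerSpan S (m + 1)) :
    NormedSpace.exp (∑ A ∈ S.filter (fun A => A.card = m + 1), τ A • MA A) *ᵥ
        (NormedSpace.exp (kGen τ (S.filter (fun A => m + 1 < A.card))) *ᵥ v) =
      NormedSpace.exp (kGen τ (S.filter (fun A => m < A.card))) *ᵥ v := by
  have hinv : ∀ T : Finset (Finset (Fin n)), (∀ A ∈ T, A ∈ S ∧ m + 1 ≤ A.card) →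
      ∀ w ∈ layerSpan S (m + 1), kGen τ T *ᵥ w ∈ layerSpan S (m + 1) :=
    fun T hT _ => kGen_mulVec_mem_layerSpan τ fun A hA A' hA' hk =>
      uncut_of_compatible (hcompat A' hA' A (hT A hA).1) (hk.trans (hT A hA).2)
  have hsplit : kGen τ (S.filter (fun A => m < A.card)) =
      kGen τ (S.filter (fun A => A.card = m + 1)) +
        kGen τ (S.filter (fun A => m + 1 < A.card)) := by
    rw [kGen, kGen, kGen, ← Finset.sum_union (Finset.disjoint_filter.mpr fun A _ h => by omega),
      ← Finset.filter_or]
    exact Finset.sum_congr (Finset.filter_congr fun A _ => by omega) fun _ _ => rfl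
  rw [hsplit, exp_add_of_commute _ _ (commute_kGen τ _ _), ← mulVec_mulVec]
  refine exp_mulVec_eq_of_eqOn (hinv _ fun A hA => ?_)
    (fun w hw => sum_MA_mulVec_eq_kGen_mulVec τ hw) (exp_mulVec_mem (hinv _ fun A hA => ?_) hv)
  · rw [Finset.mem_filter] at hA
    exact ⟨hA.1, hA.2.ge⟩
  · rw [Finset.mem_filter] at hA
    exact ⟨hA.1, hA.2.le⟩

end

theorem L_rep_eq_K_rep_general (n : ℕ) (S : Finset (Finset (Fin n)))
    (hcard : ∀ A ∈ S, 1 ≤ A.card ∧ A.card ≤ n - 1)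
    (hcompat : ∀ A ∈ S, ∀ B ∈ S, A ⊆ B ∨ B ⊆ A ∨ A ∩ B = ∅)
    (τ : Finset (Fin n) → ℝ) (π₀ π₁ : ℝ) :
    (((List.range (n - 1)).map fun j =>
          NormedSpace.exp
            (∑ A ∈ S.filter (fun A => A.card = j + 1), τ A • MA A)).prod).mulVec
        (π₀ • ket (∅ : Finset (Fin n)) + π₁ • ket (Finset.univ : Finset (Fin n))) =
      (NormedSpace.exp
          (∑ A ∈ S, τ A •
            (opOn Kmat A - (1 : Matrix (Fin n → Fin 2) (Fin n → Fin 2) ℝ)))).mulVec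
        (π₀ • ket (∅ : Finset (Fin n)) + π₁ • ket (Finset.univ : Finset (Fin n))) := by
  set v := π₀ • ket (∅ : Finset (Fin n)) + π₁ • ket (Finset.univ : Finset (Fin n))
  have hv : ∀ k, v ∈ layerSpan S k := fun k =>
    add_mem (Submodule.smul_mem _ _ (ket_mem_layerSpan fun A _ _ => uncut_empty A))
      (Submodule.smul_mem _ _ (ket_mem_layerSpan fun A _ _ => uncut_univ A))
  have htop : S.filter (fun A => n - 1 < A.card) = ∅ :=
    Finset.filter_eq_empty_iff.mpr fun A hA => (hcard A hA).2.not_gt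
  have hbot : S.filter (fun A => 0 < A.card) = S :=
    Finset.filter_true_of_mem fun A hA => (hcard A hA).1
  have h := list_prod_map_range_mulVec
    (r := fun m => NormedSpace.exp (kGen τ (S.filter (fun A => m < A.card))) *ᵥ v)
    (fun m => exp_sum_MA_mulVec_exp_kGen hcompat τ m (hv _)) (n - 1)
  rw [htop, hbot] at h
  simpa [kGen] using h

/-- For a pairwise-compatible split system `S` on `Fin n` (`n ≥ 2`) whose splits have
cardinality between `1` and `n−1`, with arbitrary weights `τ`, the `𝔏`-representation
`exp(∑_{|A|=1} τ_A M_A) ⋯ exp(∑_{|A|=n−1} τ_A M_A)·v` (factors in increasing cardinality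
from left to right) equals the `K`-representation `exp(∑_{A∈S} τ_A (K^(A) − I))·v`, where
`v = π₀·|∅⟩ + π₁·|Fin n⟩`. -/
theorem L_rep_eq_K_rep (n : ℕ) (hn : 2 ≤ n) (S : Finset (Finset (Fin n)))
    (hcard : ∀ A ∈ S, 1 ≤ A.card ∧ A.card ≤ n - 1)
    (hcompat : ∀ A ∈ S, ∀ B ∈ S, A ⊆ B ∨ B ⊆ A ∨ A ∩ B = ∅)
    (τ : Finset (Fin n) → ℝ) (π₀ π₁ : ℝ) :
    (((List.range (n - 1)).map fun j =>
          NormedSpace.exp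
            (∑ A ∈ S.filter (fun A => A.card = j + 1), τ A • MA A)).prod).mulVec
        (π₀ • ket (∅ : Finset (Fin n)) + π₁ • ket (Finset.univ : Finset (Fin n))) =
      (NormedSpace.exp
          (∑ A ∈ S, τ A •
            (opOn Kmat A - (1 : Matrix (Fin n → Fin 2) (Fin n → Fin 2) ℝ)))).mulVec
        (π₀ • ket (∅ : Finset (Fin n)) + π₁ • ket (Finset.univ : Finset (Fin n))) :=
  L_rep_eq_K_rep_general n S hcard hcompat τ π₀ π₁
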